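/- arXiv:1809.07614 — 2 statements merged into one kernel-verified Lean document; each statement's English description precedes it below -/
import Mathlib

section
/- Let d_s, d_t be doors and let P_m and P_n be finite nonempty sets of points in a metric space with static score function s. Let p_a ∈ P_m and p_b ∈ P_n be such that p_b is a nearest neighbour of p_a in P_n (dist(p_a,p_b) ≤ dist(p_a,p) for all p ∈ P_n) and p_a is a nearest neighbour of p_b in P_m (dist(p_b,p_a) ≤ dist(p_b,p) for all p ∈ P_m). Let p_i ∈ P_m with p_a ≺_{d_s} p_i and p_j ∈ P_n with p_b ≺_{d_t} p_j, and suppose dist(p_a,p_b) < dist(p_i,p_j). Then Cost(⟨d_s, p_a, p_b, d_t⟩) < Cost(⟨d_s, p_i, p_b, d_t⟩) and Cost(⟨d_s, p_a, p_b, d_t⟩) < Cost(⟨d_s, p_i, p_j, d_t⟩); in particular, every route covering the two categories via p_i and p_j is dominated by the route ⟨d_s, p_a, p_b, d_t⟩. (Paper's Pruning Rule 1.) -/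
/-- Point dominance: `pa` dominates `pb` with respect to door `d`. -/
def domBy {X : Type*} [MetricSpace X] (s : X → ℝ) (d pa pb : X) : Prop :=
  dist d pa < dist d pb ∧ s pa < s pb

/-- Cost of the route ⟨ds, p, p', dt⟩. -/
def cost {X : Type*} [MetricSpace X] (s : X → ℝ) (ds p p' dt : X) : ℝ :=
  dist ds p + dist p p' + dist p' dt + s p + s p'

/-! Both routes start with a point `pi` that `pa` dominates w.r.t. `ds`, so the first leg and the
first score strictly increase, and no other summand of the cost decreases: through `pb` the middle
leg cannot shrink because `pa` is a nearest neighbour of `pb` in `Pm`, and through `pj` every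
summand grows. -/

theorem cost_lt_cost_of_domBy {X : Type*} [MetricSpace X] {s : X → ℝ} {ds dt p q p' q' : X}
    (hpq : domBy s ds p q) (hmid : dist p p' ≤ dist q q') (hend : dist p' dt ≤ dist q' dt)
    (hs : s p' ≤ s q') :
    cost s ds p p' dt < cost s ds q q' dt := by
  obtain ⟨hds, hsq⟩ := hpq
  unfold cost
  linarith

theorem domBy.dist_lt_dist' {X : Type*} [MetricSpace X] {s : X → ℝ} {d p q : X}
    (h : domBy s d p q) : dist p d < dist q d := by
  simpa only [dist_comm] using h.1

theorem pruningRule1_general {X : Type*} [MetricSpace X] (s : X → ℝ) (ds dt : X)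
    (Pm : Finset X)
    (pa pb pi pj : X)
    (hnn_a : ∀ p ∈ Pm, dist pb pa ≤ dist pb p)
    (hpi : pi ∈ Pm)
    (hdom1 : domBy s ds pa pi) (hdom2 : domBy s dt pb pj)
    (hdist : dist pa pb < dist pi pj) :
    cost s ds pa pb dt < cost s ds pi pb dt ∧
    cost s ds pa pb dt < cost s ds pi pj dt := by
  have hmid : dist pa pb ≤ dist pi pb := by
    simpa only [dist_comm pb] using hnn_a pi hpi
  exact ⟨cost_lt_cost_of_domBy hdom1 hmid le_rfl le_rfl,
    cost_lt_cost_of_domBy hdom1 hdist.le hdom2.dist_lt_dist'.le hdom2.2.le⟩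

/-- Paper's Pruning Rule 1. -/
theorem pruningRule1 {X : Type*} [MetricSpace X] (s : X → ℝ) (ds dt : X)
    (Pm Pn : Finset X) (hPm : Pm.Nonempty) (hPn : Pn.Nonempty)
    (pa pb pi pj : X)
    (hpa : pa ∈ Pm) (hpb : pb ∈ Pn)
    (hnn_b : ∀ p ∈ Pn, dist pa pb ≤ dist pa p)
    (hnn_a : ∀ p ∈ Pm, dist pb pa ≤ dist pb p)
    (hpi : pi ∈ Pm) (hpj : pj ∈ Pn)
    (hdom1 : domBy s ds pa pi) (hdom2 : domBy s dt pb pj)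
    (hdist : dist pa pb < dist pi pj) :
    cost s ds pa pb dt < cost s ds pi pb dt ∧
    cost s ds pa pb dt < cost s ds pi pj dt :=
  pruningRule1_general s ds dt Pm pa pb pi pj hnn_a hpi hdom1 hdom2 hdist
end

section
/- Let d_s, d_t, p_a, p_b, p_j, p_x be points of a metric space and s a static score function. Set φ = (dist(d_s,p_b) + s(p_b)) − (dist(d_s,p_a) + s(p_a)). If p_b ≺_{d_s} p_j and dist(p_a,p_x) − φ < dist(p_j,p_x), then Cost(⟨d_s, p_a, p_x, d_t⟩) < Cost(⟨d_s, p_j, p_x, d_t⟩); in particular the route via p_j does not dominate the route ⟨d_s, p_a, p_x, d_t⟩. (The paper's claim for multiple objects, following Theorem 2: when points are visited in dominance order, the threshold dist(p_a,p_x) − φ computed with respect to p_b remains valid for every point p_j dominated by p_b.) -/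
/-!
The cost of a route splits into the first leg `dist ds p + s p`, the middle leg `dist p px` and
a tail independent of `p`. Here `φ` is the first-leg gap between `pb` and `pa`, and dominance of
`pb` over `pj` makes the first leg via `pj` dearer still than via `pb`; adding this to the
threshold inequality for the middle legs gives the claim.
-/

theorem domBy.dist_add_lt {X : Type*} [MetricSpace X] {s : X → ℝ} {d pa pb : X}
    (h : domBy s d pa pb) : dist d pa + s pa < dist d pb + s pb :=
  add_lt_add h.1 h.2

theorem cost_eq_first_leg_add {X : Type*} [MetricSpace X] (s : X → ℝ) (ds p p' dt : X) :
    cost s ds p p' dt = (dist ds p + s p) + dist p p' + (dist p' dt + s p') := by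
  unfold cost
  ring

/-- Multiple-objects claim following the paper's Theorem 2: the threshold
computed with respect to `pb` remains valid for every point `pj` dominated
by `pb`. -/
theorem multiObjects {X : Type*} [MetricSpace X] (s : X → ℝ)
    (ds dt pa pb pj px : X) (φ : ℝ)
    (hφ : φ = (dist ds pb + s pb) - (dist ds pa + s pa))
    (hdom : domBy s ds pb pj)
    (hthr : dist pa px - φ < dist pj px) :
    cost s ds pa px dt < cost s ds pj px dt := by
  have hleg := hdom.dist_add_lt
  rw [cost_eq_first_leg_add, cost_eq_first_leg_add]
  linarith
end
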